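/- There are only finitely many quadruples (a, b, x, y) of non-negative integers with a > b > 0 satisfying the equation 2^a + 2^b + 1 = 3^x · 5^y. -/
import Mathlib

private lemma powmod (B T M : ℕ) (hM : 1 < M) (hT : B ^ T % M = 1) (n : ℕ) :
    B ^ n % M = B ^ (n % T) % M := by
  conv_lhs => rw [← Nat.div_add_mod n T]
  rw [pow_add, pow_mul, Nat.mul_mod, Nat.pow_mod, hT, one_pow]
  have h1 : 1 % M = 1 := Nat.mod_eq_of_lt hM
  rw [h1, one_mul, Nat.mod_mod_of_dvd _ dvd_rfl]

private lemma pow2_dvd_consec {k w : ℕ} (h : 2^k ∣ w * (w+1)) :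
    2^k ∣ w ∨ 2^k ∣ (w+1) := by
  rcases Nat.even_or_odd w with he | ho
  · left
    have hodd : ¬ (2 ∣ (w+1)) := by rcases he with ⟨t, ht⟩; omega
    have hco : Nat.Coprime (2^k) (w+1) :=
      Nat.Coprime.pow_left _ ((Nat.prime_two.coprime_iff_not_dvd).mpr hodd)
    exact hco.dvd_of_dvd_mul_right h
  · right
    have hodd : ¬ (2 ∣ w) := by rcases ho with ⟨t, ht⟩; omega
    have hco : Nat.Coprime (2^k) w :=
      Nat.Coprime.pow_left _ ((Nat.prime_two.coprime_iff_not_dvd).mpr hodd)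
    exact hco.dvd_of_dvd_mul_left h

private lemma odd_dvd_two_pow {m k : ℕ} (h : m ∣ 2^k) (hm : m % 2 = 1) : m = 1 := by
  have hco : Nat.Coprime 2 m := (Nat.prime_two.coprime_iff_not_dvd).mpr (by omega)
  exact Nat.Coprime.eq_one_of_dvd (Nat.Coprime.pow_right k hco.symm) h

private lemma sq_two_pow {m α : ℕ} (hα : 1 ≤ α) (h : m * m = 2^α + 1) :
    m = 3 ∧ α = 3 := by
  have h2α : 2 ≤ 2^α := by
    calc (2:ℕ) = 2^1 := rfl
      _ ≤ 2^α := Nat.pow_le_pow_right (by norm_num) hα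
  have hm2 : m % 2 = 1 := by
    by_contra hc
    have h0 : m % 2 = 0 := by omega
    have hmm : (m*m) % 2 = 0 := by rw [Nat.mul_mod, h0]
    have h2d : (2:ℕ) ∣ 2^α := dvd_pow_self 2 (by omega)
    omega
  obtain ⟨w, hw⟩ : ∃ w, m = 2*w + 1 := ⟨m/2, by omega⟩
  have hkey : 4*(w*(w+1)) = 2^α := by
    have e : (2*w+1)*(2*w+1) = 4*(w*(w+1)) + 1 := by ring
    rw [hw, e] at h
    omega
  have hw1 : 1 ≤ w := by
    rcases Nat.eq_zero_or_pos w with h0 | h1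
    · rw [h0] at hkey; norm_num at hkey; omega
    · exact h1
  have hW : 2 ≤ w*(w+1) := by
    calc (2:ℕ) = 1*2 := by norm_num
      _ ≤ w*(w+1) := Nat.mul_le_mul hw1 (by omega)
  have hα3 : 3 ≤ α := by
    by_contra hc
    have : α = 1 ∨ α = 2 := by omega
    rcases this with h1|h1 <;> rw [h1] at hkey <;> norm_num at hkey <;> omega
  have hsub : w*(w+1) = 2^(α-2) := by
    have e : 2^α = 4 * 2^(α-2) := by
      have h4 : (4:ℕ) = 2^2 := rfl
      rw [h4, ← pow_add]
      congr 1
      omega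
    rw [e] at hkey
    omega
  have hwone : w = 1 := by
    rcases Nat.even_or_odd w with he | ho
    · exfalso
      have hdvd : (w+1) ∣ 2^(α-2) := ⟨w, by rw [← hsub]; ring⟩
      have := odd_dvd_two_pow hdvd (by rcases he with ⟨t,ht⟩; omega)
      omega
    · have hdvd : w ∣ 2^(α-2) := ⟨w+1, hsub.symm⟩
      exact odd_dvd_two_pow hdvd (by rcases ho with ⟨t,ht⟩; omega)
  constructor
  · omega
  · have h23 : 2^α = 2^3 := by rw [hwone] at hkey; norm_num at hkey; omega
    exact Nat.pow_right_injective (le_refl 2) h23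

private lemma three_pow_eq {u α : ℕ} (h : 3^u = 2^α + 1) :
    (u = 1 ∧ α = 1) ∨ (u = 2 ∧ α = 3) := by
  rcases Nat.lt_or_ge α 2 with hα | hα
  · interval_cases α
    · exfalso
      have : 3^u % 2 = 1 := by rw [Nat.pow_mod]; norm_num
      omega
    · left
      norm_num at h
      exact ⟨Nat.pow_right_injective (by norm_num) (h.trans (pow_one 3).symm), rfl⟩
  · right
    have hd : (4:ℕ) ∣ 2^α := by
      have := pow_dvd_pow 2 hα; norm_num at this; exact this
    have h4 : 3^u % 4 = 1 := by omega
    have hcyc : 3^u % 4 = 3^(u%2) % 4 := powmod 3 2 4 (by norm_num) (by norm_num) u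
    have hu2 : u % 2 = 0 := by
      rcases (show u%2 = 0 ∨ u%2 = 1 by omega) with h'|h'
      · exact h'
      · rw [h'] at hcyc; norm_num at hcyc; omega
    obtain ⟨u', hu'⟩ : ∃ t, u = 2*t := ⟨u/2, by omega⟩
    have hsq : (3^u')*(3^u') = 2^α + 1 := by rw [← h, hu', two_mul, pow_add]
    obtain ⟨h3, hα3⟩ := sq_two_pow (by omega) hsq
    have hu1 : u' = 1 := Nat.pow_right_injective (by norm_num) (h3.trans (pow_one 3).symm)
    exact ⟨by omega, hα3⟩

private lemma five_pow_eq {v α : ℕ} (hv : 1 ≤ v) (h : 5^v = 2^α + 1) :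
    v = 1 ∧ α = 2 := by
  rcases Nat.lt_or_ge α 3 with hα | hα
  · have h5 : 5 ≤ 5^v := by
      calc (5:ℕ) = 5^1 := (pow_one 5).symm
        _ ≤ 5^v := Nat.pow_le_pow_right (by norm_num) hv
    interval_cases α
    · norm_num at h; omega
    · norm_num at h; omega
    · norm_num at h
      exact ⟨Nat.pow_right_injective (by norm_num) (h.trans (pow_one 5).symm), rfl⟩
  · exfalso
    have hd : (8:ℕ) ∣ 2^α := by
      have := pow_dvd_pow 2 hα; norm_num at this; exact this
    have h8 : 5^v % 8 = 1 := by omega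
    have hcyc : 5^v % 8 = 5^(v%2) % 8 := powmod 5 2 8 (by norm_num) (by norm_num) v
    have hv2 : v % 2 = 0 := by
      rcases (show v%2 = 0 ∨ v%2 = 1 by omega) with h'|h'
      · exact h'
      · rw [h'] at hcyc; norm_num at hcyc; omega
    obtain ⟨v', hv'⟩ : ∃ t, v = 2*t := ⟨v/2, by omega⟩
    have hsq : (5^v')*(5^v') = 2^α + 1 := by rw [← h, hv', two_mul, pow_add]
    obtain ⟨h5', -⟩ := sq_two_pow (by omega) hsq
    have hv'1 : (5:ℕ) ≤ 5^v' := by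
      calc (5:ℕ) = 5^1 := (pow_one 5).symm
        _ ≤ 5^v' := Nat.pow_le_pow_right (by norm_num) (by omega)
    omega

private lemma even_case {a b α z : ℕ} (hz3 : 3 ≤ z) (hzodd : z % 2 = 1)
    (ha : a = 2*α) (hb3 : 3 ≤ b) (hba : b < a)
    (hzz : z*z = 2^a + 2^b + 1) : z = 2^α + 1 ∧ b = α + 1 := by
  have hα2 : 2 ≤ α := by omega
  obtain ⟨w, hw⟩ : ∃ w, z = 2*w+1 := ⟨z/2, by omega⟩
  have hw1 : 1 ≤ w := by omega
  have h4w : 4*(w*(w+1)) = 2^a + 2^b := by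
    have e : (2*w+1)*(2*w+1) = 4*(w*(w+1)) + 1 := by ring
    rw [hw, e] at hzz
    omega
  have hsplit : w*(w+1) = 2^(b-2) * 2^(a-b) + 2^(b-2) := by
    have e1 : 2^a = 4*(2^(b-2) * 2^(a-b)) := by
      have h4 : (4:ℕ) = 2^2 := rfl
      rw [h4, ← pow_add, ← pow_add]
      congr 1
      omega
    have e2 : 2^b = 4*2^(b-2) := by
      have h4 : (4:ℕ) = 2^2 := rfl
      rw [h4, ← pow_add]
      congr 1
      omega
    rw [e1, e2] at h4w
    omega
  have hdvd : 2^(b-2) ∣ w ∨ 2^(b-2) ∣ (w+1) :=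
    pow2_dvd_consec ⟨2^(a-b) + 1, by rw [hsplit]; ring⟩
  have hle : 2^(b-2) ≤ w + 1 := by
    rcases hdvd with hd | hd
    · exact le_trans (Nat.le_of_dvd (by omega) hd) (by omega)
    · exact Nat.le_of_dvd (by omega) hd
  rcases Nat.lt_or_ge b (α+2) with hbs | hbl
  · -- b ≤ α + 1 : main case
    have epow : 2^α * 2^α = 2^a := by rw [← pow_add]; congr 1; omega
    have hp : 0 < 2^b := pow_pos (by norm_num) b
    have hzgt : 2^α < z := by
      by_contra hc
      push_neg at hc
      have hmm := Nat.mul_le_mul hc hc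
      rw [epow] at hmm
      omega
    obtain ⟨d, hd, hd1⟩ : ∃ d, z = 2^α + d ∧ 1 ≤ d := ⟨z - 2^α, by omega, by omega⟩
    have hkey2 : d*(2*2^α + d) = 2^b + 1 := by
      have e2 : (2^α + d)*(2^α + d) = 2^α*2^α + d*(2*2^α + d) := by ring
      rw [hd, e2, epow] at hzz
      omega
    have hble : 2^b ≤ 2*2^α := by
      have h1 : 2^b ≤ 2^(α+1) := Nat.pow_le_pow_right (by norm_num) (by omega)
      have h2 : 2^(α+1) = 2*2^α := by rw [pow_succ]; ring
      omega
    have hpα : 0 < 2^α := pow_pos (by norm_num) α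
    have hd' : d = 1 := by
      by_contra hc
      have hd2 : 2 ≤ d := by omega
      have hmul : 2*(2*2^α + 2) ≤ d*(2*2^α + d) := Nat.mul_le_mul hd2 (by omega)
      rw [hkey2] at hmul
      omega
    subst hd'
    constructor
    · exact hd
    · have hpe : 2^(α+1) = 2^b := by
        have e : 2^(α+1) = 2*2^α := by rw [pow_succ]; ring
        omega
      exact (Nat.pow_right_injective (le_refl 2) hpe).symm
  · -- b ≥ α + 2 : impossible
    exfalso
    have h1 : 2^(b-1) ≤ z + 1 := by
      have e : 2^(b-1) = 2^(b-2)*2 := by rw [← pow_succ]; congr 1; omega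
      omega
    have h2 : 2^(b-1)*2^(b-1) ≤ (z+1)*(z+1) := Nat.mul_le_mul h1 h1
    have h3 : 2^(a+2) ≤ 2^(b-1)*2^(b-1) := by
      rw [← pow_add]
      exact Nat.pow_le_pow_right (by norm_num) (by omega)
    have h4 : (z+1)*(z+1) ≤ 2*(z*z) := by nlinarith
    have h5 : 2^(a+2) = 4*2^a := by rw [pow_add]; ring
    have h6 : 2*2^b ≤ 2^a := by
      have hb1 : 2^(b+1) ≤ 2^a := Nat.pow_le_pow_right (by norm_num) (by omega)
      have e : 2^(b+1) = 2*2^b := by rw [pow_succ]; ring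
      omega
    have h16 : 16 ≤ 2^a := by
      have h47 : (2:ℕ)^4 ≤ 2^a := Nat.pow_le_pow_right (by norm_num) (by omega)
      norm_num at h47
      exact h47
    omega

set_option maxHeartbeats 2000000 in
private lemma key {a b x y : ℕ} (hba : b < a) (hb : 0 < b)
    (h : 2^a + 2^b + 1 = 3^x * 5^y) :
    (a = 6 ∧ b = 4 ∧ x = 4 ∧ y = 0) ∨ (a = 4 ∧ b = 3 ∧ x = 0 ∧ y = 2) := by
  rcases (show b = 1 ∨ b = 2 ∨ 3 ≤ b by omega) with hb1 | hb2 | hb3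
  · -- b = 1 : impossible
    exfalso
    subst hb1
    have ha2 : 2 ≤ a := by omega
    have hx0 : x = 0 := by
      by_contra hx
      have h3 : (3:ℕ) ∣ 3^x*5^y := dvd_mul_of_dvd_left (dvd_pow_self 3 hx) _
      rw [← h] at h3
      norm_num at h3
      have h32 : (3:ℕ) ∣ 2^a := by omega
      have := Nat.Prime.dvd_of_dvd_pow Nat.prime_three h32
      norm_num at this
    subst hx0
    rw [pow_zero, one_mul] at h
    have e5 : 5^y % 4 = 1 := by rw [Nat.pow_mod]; norm_num
    have e2 : (4:ℕ) ∣ 2^a := by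
      have := pow_dvd_pow 2 ha2; norm_num at this; exact this
    norm_num at h
    omega
  · -- b = 2 : impossible
    exfalso
    subst hb2
    have ha3 : 3 ≤ a := by omega
    have hy0 : y = 0 := by
      by_contra hy
      have h5 : (5:ℕ) ∣ 3^x*5^y := dvd_mul_of_dvd_right (dvd_pow_self 5 hy) _
      rw [← h] at h5
      norm_num at h5
      have h52 : (5:ℕ) ∣ 2^a := by omega
      have := (by norm_num : Nat.Prime 5).dvd_of_dvd_pow h52
      norm_num at this
    subst hy0
    rw [pow_zero, mul_one] at h
    have e3 : 3^x % 8 = 3^(x%2) % 8 := powmod 3 2 8 (by norm_num) (by norm_num) x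
    have e2 : (8:ℕ) ∣ 2^a := by
      have := pow_dvd_pow 2 ha3; norm_num at this; exact this
    norm_num at h
    rcases (show x%2 = 0 ∨ x%2 = 1 by omega) with h'|h' <;>
      rw [h'] at e3 <;> norm_num at e3 <;> omega
  · -- b ≥ 3
    have ha4 : 4 ≤ a := by omega
    have p2a : 0 < 2^a := pow_pos (by norm_num) a
    have p2b : 0 < 2^b := pow_pos (by norm_num) b
    have e2a8 : (8:ℕ) ∣ 2^a := by
      have := pow_dvd_pow 2 (show 3 ≤ a by omega); norm_num at this; exact this
    have e2b8 : (8:ℕ) ∣ 2^b := by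
      have := pow_dvd_pow 2 hb3; norm_num at this; exact this
    have hmul8 : (3^x*5^y) % 8 = ((3^(x%2)%8) * (5^(y%2)%8)) % 8 := by
      rw [Nat.mul_mod, powmod 3 2 8 (by norm_num) (by norm_num) x,
        powmod 5 2 8 (by norm_num) (by norm_num) y]
    have hxy2 : x % 2 = 0 ∧ y % 2 = 0 := by
      rcases (show x%2 = 0 ∨ x%2 = 1 by omega) with h1|h1 <;>
        rcases (show y%2 = 0 ∨ y%2 = 1 by omega) with h2|h2
      · exact ⟨h1, h2⟩
      all_goals (exfalso; rw [h1, h2] at hmul8; norm_num at hmul8; omega)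
    obtain ⟨hx2, hy2⟩ := hxy2
    have hxy0 : ¬(x = 0 ∧ y = 0) := by
      rintro ⟨rfl, rfl⟩
      simp only [pow_zero, mul_one] at h
      omega
    by_cases hy0 : y = 0
    · -- y = 0 : equation 2^a+2^b+1 = 3^x
      subst hy0
      rw [pow_zero, mul_one] at h
      have hx1 : 1 ≤ x := by
        rcases Nat.eq_zero_or_pos x with h0|h1
        · exact absurd ⟨h0, rfl⟩ hxy0
        · exact h1
      have d3 : (3:ℕ) ∣ 2^a + 2^b + 1 := by
        rw [h]; exact dvd_pow_self 3 (by omega)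
      have e3a : 2^a % 3 = 2^(a%2) % 3 := powmod 2 2 3 (by norm_num) (by norm_num) a
      have e3b : 2^b % 3 = 2^(b%2) % 3 := powmod 2 2 3 (by norm_num) (by norm_num) b
      have hap : a % 2 = 0 := by
        rcases (show a%2 = 0 ∨ a%2 = 1 by omega) with h1|h1
        · exact h1
        · exfalso
          rcases (show b%2 = 0 ∨ b%2 = 1 by omega) with h2|h2 <;>
            (rw [h1] at e3a; rw [h2] at e3b; norm_num at e3a e3b; omega)
      obtain ⟨α, hα⟩ : ∃ t, a = 2*t := ⟨a/2, by omega⟩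
      obtain ⟨u, hu⟩ : ∃ t, x = 2*t := ⟨x/2, by omega⟩
      have hu1 : 1 ≤ u := by omega
      have hz3 : 3 ≤ 3^u := by
        calc (3:ℕ) = 3^1 := (pow_one 3).symm
          _ ≤ 3^u := Nat.pow_le_pow_right (by norm_num) hu1
      have hzodd : 3^u % 2 = 1 := by rw [Nat.pow_mod]; norm_num
      have hzz : (3^u)*(3^u) = 2^a + 2^b + 1 := by
        rw [h, hu, two_mul, pow_add]
      obtain ⟨hzval, hbval⟩ := even_case hz3 hzodd hα hb3 hba hzz
      rcases three_pow_eq hzval with ⟨hu', hα'⟩ | ⟨hu', hα'⟩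
      · omega
      · left; exact ⟨by omega, by omega, by omega, rfl⟩
    · have hy1 : 1 ≤ y := by omega
      by_cases hx0 : x = 0
      · -- x = 0 : equation 2^a+2^b+1 = 5^y
        subst hx0
        rw [pow_zero, one_mul] at h
        obtain ⟨v, hv⟩ : ∃ t, y = 2*t := ⟨y/2, by omega⟩
        have hv1 : 1 ≤ v := by omega
        rcases (show a%2 = 0 ∨ a%2 = 1 by omega) with hap | hap
        · -- a even
          obtain ⟨α, hα⟩ : ∃ t, a = 2*t := ⟨a/2, by omega⟩
          have hz5 : 5 ≤ 5^v := by
            calc (5:ℕ) = 5^1 := (pow_one 5).symm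
              _ ≤ 5^v := Nat.pow_le_pow_right (by norm_num) hv1
          have hzodd : 5^v % 2 = 1 := by rw [Nat.pow_mod]; norm_num
          have hzz : (5^v)*(5^v) = 2^a + 2^b + 1 := by
            rw [h, hv, two_mul, pow_add]
          obtain ⟨hzval, hbval⟩ := even_case (by omega) hzodd hα hb3 hba hzz
          obtain ⟨hv', hα'⟩ := five_pow_eq hv1 hzval
          right; exact ⟨by omega, by omega, rfl, by omega⟩
        · -- a odd : impossible
          exfalso
          have e3a : 2^a % 3 = 2^(a%2) % 3 := powmod 2 2 3 (by norm_num) (by norm_num) a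
          have e3b : 2^b % 3 = 2^(b%2) % 3 := powmod 2 2 3 (by norm_num) (by norm_num) b
          have e3y : 5^y % 3 = 5^(y%2) % 3 := powmod 5 2 3 (by norm_num) (by norm_num) y
          rw [hy2] at e3y; norm_num at e3y
          rw [hap] at e3a; norm_num at e3a
          have hbp : b % 2 = 0 := by
            rcases (show b%2 = 0 ∨ b%2 = 1 by omega) with h2|h2
            · exact h2
            · exfalso; rw [h2] at e3b; norm_num at e3b; omega
          have d5 : (5:ℕ) ∣ 2^a+2^b+1 := by
            rw [h]; exact dvd_pow_self 5 (by omega)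
          have e5a : 2^a % 5 = 2^(a%4) % 5 := powmod 2 4 5 (by norm_num) (by norm_num) a
          have e5b : 2^b % 5 = 2^(b%4) % 5 := powmod 2 4 5 (by norm_num) (by norm_num) b
          have ha4' : a % 4 = 3 := by
            rcases (show a%4 = 1 ∨ a%4 = 3 by omega) with h1|h1
            · exfalso
              rcases (show b%4 = 0 ∨ b%4 = 2 by omega) with h2|h2 <;>
                (rw [h1] at e5a; rw [h2] at e5b; norm_num at e5a e5b; omega)
            · exact h1
          have hb4 : b % 4 = 0 := by
            rcases (show b%4 = 0 ∨ b%4 = 2 by omega) with h2|h2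
            · exact h2
            · exfalso; rw [ha4'] at e5a; rw [h2] at e5b; norm_num at e5a e5b; omega
          have hb4' : 4 ≤ b := by omega
          have d16a : (16:ℕ) ∣ 2^a := by
            have := pow_dvd_pow 2 (show 4 ≤ a by omega); norm_num at this; exact this
          have d16b : (16:ℕ) ∣ 2^b := by
            have := pow_dvd_pow 2 hb4'; norm_num at this; exact this
          have e16 : 5^y % 16 = 5^(y%4) % 16 := powmod 5 4 16 (by norm_num) (by norm_num) y
          have hy4 : y % 4 = 0 := by
            rcases (show y%4 = 0 ∨ y%4 = 2 by omega) with h2|h2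
            · exact h2
            · exfalso; rw [h2] at e16; norm_num at e16; omega
          have e17a : 2^a % 17 = 2^(a%8) % 17 := powmod 2 8 17 (by norm_num) (by norm_num) a
          have e17b : 2^b % 17 = 2^(b%8) % 17 := powmod 2 8 17 (by norm_num) (by norm_num) b
          have e17y : 5^y % 17 = 5^(y%16) % 17 := powmod 5 16 17 (by norm_num) (by norm_num) y
          have va : 2^a % 17 = 8 ∨ 2^a % 17 = 9 := by
            rcases (show a%8 = 3 ∨ a%8 = 7 by omega) with h1|h1
            · left; rw [h1] at e17a; norm_num at e17a; exact e17a
            · right; rw [h1] at e17a; norm_num at e17a; exact e17a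
          have vb : 2^b % 17 = 1 ∨ 2^b % 17 = 16 := by
            rcases (show b%8 = 0 ∨ b%8 = 4 by omega) with h2|h2
            · left; rw [h2] at e17b; norm_num at e17b; exact e17b
            · right; rw [h2] at e17b; norm_num at e17b; exact e17b
          have vy : 5^y % 17 = 1 ∨ 5^y % 17 = 13 ∨ 5^y % 17 = 16 ∨ 5^y % 17 = 4 := by
            rcases (show y%16 = 0 ∨ y%16 = 4 ∨ y%16 = 8 ∨ y%16 = 12 by omega) with h3|h3|h3|h3
            · left; rw [h3] at e17y; norm_num at e17y; exact e17y
            · right; left; rw [h3] at e17y; norm_num at e17y; exact e17y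
            · right; right; left; rw [h3] at e17y; norm_num at e17y; exact e17y
            · right; right; right; rw [h3] at e17y; norm_num at e17y; exact e17y
          clear e3a e3b e3y e5a e5b e16 e17a e17b e17y d5 d16a d16b hmul8 hxy0
          rcases va with v1|v1 <;> rcases vb with v2|v2 <;>
            rcases vy with v3|v3|v3|v3 <;> omega
      · -- x ≥ 1 and y ≥ 1 : impossible
        exfalso
        have hx1 : 1 ≤ x := by omega
        have d3 : (3:ℕ) ∣ 2^a+2^b+1 := by
          rw [h]; exact dvd_mul_of_dvd_left (dvd_pow_self 3 (by omega)) _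
        have e3a : 2^a % 3 = 2^(a%2) % 3 := powmod 2 2 3 (by norm_num) (by norm_num) a
        have e3b : 2^b % 3 = 2^(b%2) % 3 := powmod 2 2 3 (by norm_num) (by norm_num) b
        have hab : a % 2 = 0 ∧ b % 2 = 0 := by
          rcases (show a%2 = 0 ∨ a%2 = 1 by omega) with h1|h1 <;>
            rcases (show b%2 = 0 ∨ b%2 = 1 by omega) with h2|h2
          · exact ⟨h1, h2⟩
          all_goals (exfalso; rw [h1] at e3a; rw [h2] at e3b; norm_num at e3a e3b; omega)
        have d5 : (5:ℕ) ∣ 2^a+2^b+1 := by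
          rw [h]; exact dvd_mul_of_dvd_right (dvd_pow_self 5 (by omega)) _
        have e5a : 2^a % 5 = 2^(a%4) % 5 := powmod 2 4 5 (by norm_num) (by norm_num) a
        have e5b : 2^b % 5 = 2^(b%4) % 5 := powmod 2 4 5 (by norm_num) (by norm_num) b
        rcases (show a%4 = 0 ∨ a%4 = 2 by omega) with h1|h1 <;>
          rcases (show b%4 = 0 ∨ b%4 = 2 by omega) with h2|h2 <;>
          (rw [h1] at e5a; rw [h2] at e5b; norm_num at e5a e5b; omega)

/-- There are only finitely many quadruples `(a, b, x, y)` of non-negative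
integers with `a > b > 0` satisfying `2^a + 2^b + 1 = 3^x · 5^y`. -/
theorem stmt_9 :
    {q : ℕ × ℕ × ℕ × ℕ | q.2.1 < q.1 ∧ 0 < q.2.1 ∧
      2 ^ q.1 + 2 ^ q.2.1 + 1 = 3 ^ q.2.2.1 * 5 ^ q.2.2.2}.Finite := by
  apply Set.Finite.subset
    ((Set.finite_singleton ((4,3,0,2) : ℕ × ℕ × ℕ × ℕ)).insert (6,4,4,0))
  rintro ⟨a, b, x, y⟩ ⟨h1, h2, h3⟩
  rcases key h1 h2 h3 with ⟨rfl, rfl, rfl, rfl⟩ | ⟨rfl, rfl, rfl, rfl⟩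
  · exact Set.mem_insert _ _
  · exact Set.mem_insert_of_mem _ rfl
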